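/- arXiv:2110.10904 — 2 statements merged into one kernel-verified Lean document; each statement's English description precedes it below -/
import Mathlib

section
/- Let g₁, g₂ be hyperbolic isometries of a simplicial tree whose axes overlap, with the same orientation, in a path of length Δ ≥ min{l(g₁), l(g₂)}, and suppose l(g₁) ≤ l(g₂). Then l(g₁²g₂⁻¹) ≤ l(g₁g₂) − l(g₁). -/
open SimpleGraph

variable {V : Type*}

/-- Translation length of a graph automorphism of `G` (min displacement over vertices). -/
noncomputable def ell (G : SimpleGraph V) (g : G ≃g G) : ℕ :=
  sInf (Set.range fun x => G.dist x (g x))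

/-- The set of vertices realizing the minimal displacement (the axis, for hyperbolic `g`). -/
def axisSet (G : SimpleGraph V) (g : G ≃g G) : Set V :=
  {x | G.dist x (g x) = ell G g}

/-- `g` acts without inversions: no edge is flipped. -/
def noInv (G : SimpleGraph V) (g : G ≃g G) : Prop :=
  ∀ x y, G.Adj x y → ¬(g x = y ∧ g y = x)

/-- The segment (geodesic) between `p` and `q` in the tree. -/
def seg (G : SimpleGraph V) (p q : V) : Set V :=
  {x | G.dist p x + G.dist x q = G.dist p q}

/-- The open segment between `p` and `q` (endpoints removed). -/
def openSeg (G : SimpleGraph V) (p q : V) : Set V :=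
  {x | x ∈ seg G p q ∧ x ≠ p ∧ x ≠ q}

/-- Distance from a vertex to a set of vertices. -/
noncomputable def distToSet (G : SimpleGraph V) (x : V) (S : Set V) : ℕ :=
  sInf (G.dist x '' S)

/-- Distance between two sets of vertices. -/
noncomputable def setDist (G : SimpleGraph V) (S T : Set V) : ℕ :=
  sInf (Set.image2 G.dist S T)

/-- The projection of `B` onto `A`: points of `A` at minimal distance from `B`. -/
noncomputable def projOn (G : SimpleGraph V) (A B : Set V) : Set V :=
  {x | x ∈ A ∧ distToSet G x B = setDist G A B}

/-- `g` translates the vertex `p` (assumed on its axis) towards the vertex `q`. -/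
noncomputable def translatesToward (G : SimpleGraph V) (g : G ≃g G) (p q : V) : Prop :=
  (G.dist (g p) q : ℤ) = |(G.dist p q : ℤ) - (ell G g : ℤ)|

/-!
In a tree, two geodesic segments overlapping in a nondegenerate segment concatenate to a
geodesic; this follows from the four-point condition, which in turn comes from medians of
triangles. Put `r = g₁ p`. As `l(g₁) ≤ Δ`, the point `r` lies on the common axis between `p` and
`g₂ p`, at distance `l(g₂) - l(g₁)` from `g₂ p`, so `g₁²g₂⁻¹` moves `g₂ p` to `g₁ r` by at most
`l(g₂)`. On the other hand `g₂⁻¹ p, p, r, g₁ r, g₁ g₂ r` lie in this order on a geodesic, so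
`g₁g₂` moves `g₂⁻¹ p` by `L = l(g₁) + l(g₂)` and `(g₁g₂)²` moves it by `2L`. Then the orbit of
`g₂⁻¹ p` is a geodesic ray of slope `L`, while every orbit of `g₁g₂` grows at most linearly with
slope the displacement of its starting point; hence `l(g₁g₂) ≥ L`.
-/

lemma left_mem_seg (G : SimpleGraph V) (p q : V) : p ∈ seg G p q := by
  simp [seg]

lemma seg_comm (G : SimpleGraph V) (p q : V) : seg G p q = seg G q p := by
  ext x
  simp only [seg, Set.mem_ofPred_eq, dist_comm (u := p), dist_comm (v := q), add_comm]

lemma seg_subset_seg {G : SimpleGraph V} (hc : G.Connected) {p q s : V}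
    (hq : q ∈ seg G p s) : seg G p q ⊆ seg G p s := by
  intro x hx
  have := hc.dist_triangle (u := x) (v := q) (w := s)
  have := hc.dist_triangle (u := p) (v := x) (w := s)
  simp only [seg, Set.mem_ofPred_eq] at *
  omega

lemma ell_le_dist {G : SimpleGraph V} (g : G ≃g G) (x : V) : ell G g ≤ G.dist x (g x) :=
  Nat.sInf_le ⟨x, rfl⟩

lemma apply_mem_seg_of_translatesToward {G : SimpleGraph V} {g : G ≃g G} {p q : V}
    (hp : p ∈ axisSet G g) (hpq : translatesToward G g p q) (hle : ell G g ≤ G.dist p q) :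
    g p ∈ seg G p q := by
  have hp' : G.dist p (g p) = ell G g := hp
  unfold translatesToward at hpq
  rw [abs_of_nonneg (by omega)] at hpq
  simp only [seg, Set.mem_ofPred_eq]
  omega

lemma mem_seg_apply_of_translatesToward {G : SimpleGraph V} {g : G ≃g G} {p q : V}
    (hp : p ∈ axisSet G g) (hpq : translatesToward G g p q) (hle : G.dist p q ≤ ell G g) :
    q ∈ seg G p (g p) := by
  have hp' : G.dist p (g p) = ell G g := hp
  have := dist_comm (G := G) (u := q) (v := g p)
  unfold translatesToward at hpq
  rw [abs_of_nonpos (by omega)] at hpq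
  simp only [seg, Set.mem_ofPred_eq]
  omega

namespace SimpleGraph

variable {G : SimpleGraph V}

lemma Iso.dist_apply_le {W : Type*} {G' : SimpleGraph W} (f : G ≃g G') (x y : V) :
    G'.dist (f x) (f y) ≤ G.dist x y := by
  by_cases h : G.Reachable x y
  · obtain ⟨w, hw⟩ := h.exists_walk_length_eq_dist
    simpa [hw] using dist_le (w.map f.toHom)
  · have h' : ¬G'.Reachable (f x) (f y) := fun h' => h (by simpa using h'.map f.symm.toHom)
    simp [dist_eq_zero_of_not_reachable h']

lemma Iso.dist_apply {W : Type*} {G' : SimpleGraph W} (f : G ≃g G') (x y : V) :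
    G'.dist (f x) (f y) = G.dist x y :=
  (f.dist_apply_le x y).antisymm (by simpa using f.symm.dist_apply_le (f x) (f y))

lemma Iso.apply_mem_seg {W : Type*} {G' : SimpleGraph W} (f : G ≃g G') {a b x : V}
    (hx : x ∈ seg G a b) : f x ∈ seg G' (f a) (f b) := by
  simpa only [seg, Set.mem_ofPred_eq, f.dist_apply] using hx

lemma Walk.dist_getVert {u v : V} {p : G.Walk u v} (hp : p.length = G.dist u v) {i : ℕ}
    (hi : i ≤ p.length) : G.dist u (p.getVert i) = i := by
  rw [← length_eq_dist_of_subwalk hp (p.isSubwalk_take i), Walk.take_length]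
  omega

lemma Walk.IsPath.append {u v w : V} {p : G.Walk u v} {q : G.Walk v w} (hp : p.IsPath)
    (hq : q.IsPath) (h : ∀ x ∈ p.support, x ∈ q.support → x = v) : (p.append q).IsPath := by
  have hq' := hq.support_nodup
  rw [← Walk.cons_tail_support, List.nodup_cons] at hq'
  rw [Walk.isPath_def, Walk.support_append, List.nodup_append]
  refine ⟨hp.support_nodup, hq'.2, fun x hx y hy hxy => ?_⟩
  subst hxy
  exact hq'.1 (h x hx (List.mem_of_mem_tail hy) ▸ hy)

lemma Connected.dist_pow_apply_le (hc : G.Connected) (h : G ≃g G) (y : V) (n : ℕ) :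
    G.dist y ((h ^ n) y) ≤ n * G.dist y (h y) := by
  induction n with
  | zero => simp
  | succ n ih =>
    have := hc.dist_triangle (u := y) (v := (h ^ n) y) (w := (h ^ (n + 1)) y)
    rw [pow_succ, RelIso.mul_apply, (h ^ n).dist_apply] at this
    rw [pow_succ, RelIso.mul_apply]
    linarith

lemma IsAcyclic.length_eq_dist_of_isPath (hG : G.IsAcyclic) {u v : V} {p : G.Walk u v}
    (hp : p.IsPath) : p.length = G.dist u v := by
  obtain ⟨q, hq, hqd⟩ := p.reachable.exists_path_of_dist
  have hpq : p = q := congrArg Subtype.val ((hG.subsingleton_path u v).elim ⟨p, hp⟩ ⟨q, hq⟩)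
  rw [hpq, hqd]

lemma IsAcyclic.mem_seg_of_mem_support (hG : G.IsAcyclic) {u v x : V} {p : G.Walk u v}
    (hp : p.IsPath) (hx : x ∈ p.support) : x ∈ seg G u v := by
  classical
  have hl := congrArg Walk.length (p.take_spec hx)
  rwa [Walk.length_append, hG.length_eq_dist_of_isPath hp,
    hG.length_eq_dist_of_isPath (hp.takeUntil hx),
    hG.length_eq_dist_of_isPath (hp.dropUntil hx)] at hl

namespace IsTree

lemma mem_support_of_mem_seg (hG : G.IsTree) {u v x : V} {p : G.Walk u v} (hp : p.IsPath)
    (hx : x ∈ seg G u v) : x ∈ p.support := by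
  obtain ⟨p₁, hp₁⟩ := hG.connected.exists_walk_length_eq_dist u x
  obtain ⟨p₂, hp₂⟩ := hG.connected.exists_walk_length_eq_dist x v
  have hgeod : (p₁.append p₂).length = G.dist u v := by
    rw [Walk.length_append, hp₁, hp₂]
    exact hx
  have hpath := (p₁.append p₂).isPath_of_length_eq_dist hgeod
  have hp' : p₁.append p₂ = p :=
    congrArg Subtype.val ((hG.isAcyclic.subsingleton_path u v).elim ⟨_, hpath⟩ ⟨p, hp⟩)
  rw [← hp']
  exact (Walk.mem_support_append_iff _ _).mpr (Or.inl p₁.end_mem_support)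

lemma mem_seg_of_dist_le (hG : G.IsTree) {a b x y : V} (hx : x ∈ seg G a b)
    (hy : y ∈ seg G a b) (h : G.dist a x ≤ G.dist a y) : x ∈ seg G a y := by
  classical
  obtain ⟨p, hp, -⟩ := hG.connected.exists_path_of_dist a b
  have hyp := hG.mem_support_of_mem_seg hp hy
  have hxp := hG.mem_support_of_mem_seg hp hx
  rw [← p.take_spec hyp, Walk.mem_support_append_iff] at hxp
  rcases hxp with hx' | hx'
  · exact hG.isAcyclic.mem_seg_of_mem_support (hp.takeUntil hyp) hx'
  · have hxyb := hG.isAcyclic.mem_seg_of_mem_support (hp.dropUntil hyp) hx'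
    have := dist_comm (G := G) (u := x) (v := y)
    simp only [seg, Set.mem_ofPred_eq] at *
    omega

lemma eq_of_mem_seg_of_dist_eq (hG : G.IsTree) {a b x y : V} (hx : x ∈ seg G a b)
    (hy : y ∈ seg G a b) (h : G.dist a x = G.dist a y) : x = y := by
  have hxy : G.dist a x + G.dist x y = G.dist a y := hG.mem_seg_of_dist_le hx hy h.le
  exact hG.connected.dist_eq_zero_iff.mp (by omega)

lemma mem_seg_of_forall_dist_le (hG : G.IsTree) {a m b : V} {q : G.Walk m b} (hq : q.IsPath)
    (hmin : ∀ x ∈ q.support, G.dist a m ≤ G.dist a x) : m ∈ seg G a b := by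
  obtain ⟨p, hp, hpd⟩ := hG.connected.exists_path_of_dist a m
  have hpq : (p.append q).IsPath := hp.append hq fun x hxp hxq => by
    have hx : x ∈ seg G a m := hG.isAcyclic.mem_seg_of_mem_support hp hxp
    have := hmin x hxq
    exact hG.connected.dist_eq_zero_iff.mp (by simp only [seg, Set.mem_ofPred_eq] at hx; omega)
  have := hG.isAcyclic.length_eq_dist_of_isPath hpq
  rwa [Walk.length_append, hpd, hG.isAcyclic.length_eq_dist_of_isPath hq] at this

lemma exists_median (hG : G.IsTree) (a b c : V) :
    ∃ m, m ∈ seg G a b ∧ m ∈ seg G b c ∧ m ∈ seg G a c := by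
  classical
  obtain ⟨w, hw, -⟩ := hG.connected.exists_path_of_dist b c
  obtain ⟨m, hm, hmin⟩ := w.support.toFinset.exists_min_image (G.dist a) ⟨b, by simp⟩
  rw [List.mem_toFinset] at hm
  have hmin' : ∀ x ∈ w.support, G.dist a m ≤ G.dist a x := fun x hx =>
    hmin x (List.mem_toFinset.mpr hx)
  refine ⟨m, ?_, hG.isAcyclic.mem_seg_of_mem_support hw hm, ?_⟩
  · refine hG.mem_seg_of_forall_dist_le (hw.takeUntil hm).reverse fun x hx => hmin' x ?_
    exact w.support_takeUntil_subset_support hm (by simpa using hx)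
  · exact hG.mem_seg_of_forall_dist_le (hw.dropUntil hm) fun x hx =>
      hmin' x (w.support_dropUntil_subset_support hm hx)

lemma dist_add_dist_le_max (hG : G.IsTree) (a b c d : V) :
    G.dist a b + G.dist c d ≤ max (G.dist a c + G.dist b d) (G.dist a d + G.dist b c) := by
  -- project `c` and `d` to medians on the geodesic from `a` to `b`
  have key : ∀ c d m₁ m₂ : V, m₁ ∈ seg G a b → m₁ ∈ seg G b c → m₁ ∈ seg G a c →
      m₂ ∈ seg G a b → m₂ ∈ seg G b d → m₂ ∈ seg G a d → G.dist a m₁ ≤ G.dist a m₂ →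
      G.dist a b + G.dist c d ≤ G.dist a d + G.dist b c := by
    intro c d m₁ m₂ h₁ h₁c h₁a h₂ h₂d h₂a hle
    have h₁₂ : m₁ ∈ seg G a m₂ := hG.mem_seg_of_dist_le h₁ h₂ hle
    have := hG.connected.dist_triangle (u := c) (v := m₁) (w := d)
    have := hG.connected.dist_triangle (u := m₁) (v := m₂) (w := d)
    have := dist_comm (G := G) (u := c) (v := m₁)
    have := dist_comm (G := G) (u := m₁) (v := b)
    simp only [seg, Set.mem_ofPred_eq] at *
    omega
  obtain ⟨m₁, h₁⟩ := hG.exists_median a b c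
  obtain ⟨m₂, h₂⟩ := hG.exists_median a b d
  have := dist_comm (G := G) (u := c) (v := d)
  rcases le_total (G.dist a m₁) (G.dist a m₂) with hle | hle
  · exact le_max_of_le_right (key c d m₁ m₂ h₁.1 h₁.2.1 h₁.2.2 h₂.1 h₂.2.1 h₂.2.2 hle)
  · have := key d c m₂ m₁ h₂.1 h₂.2.1 h₂.2.2 h₁.1 h₁.2.1 h₁.2.2 hle
    exact le_max_of_le_left (by omega)

lemma dist_eq_add_add_of_mem_seg (hG : G.IsTree) {a p r c : V} (hpr : 0 < G.dist p r)
    (hp : p ∈ seg G a r) (hr : r ∈ seg G p c) :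
    G.dist a c = G.dist a p + G.dist p r + G.dist r c := by
  have h4 := hG.dist_add_dist_le_max a r p c
  have := hG.connected.dist_triangle (u := a) (v := p) (w := c)
  have := dist_comm (G := G) (u := r) (v := p)
  simp only [seg, Set.mem_ofPred_eq] at hp hr
  rcases le_max_iff.mp h4 with h | h <;> omega

lemma apply_apply_ne_self (hG : G.IsTree) {g : G ≃g G} (hg : noInv G g) (hpos : 0 < ell G g)
    {a : V} (ha : a ∈ axisSet G g) : g (g a) ≠ a := by
  intro hfix
  obtain ⟨w, hw⟩ := hG.connected.exists_walk_length_eq_dist a (g a)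
  have hwl : w.length = ell G g := hw.trans ha
  have hmem : ∀ i, w.getVert i ∈ seg G a (g a) := fun i =>
    hG.isAcyclic.mem_seg_of_mem_support (w.isPath_of_length_eq_dist hw) (w.getVert_mem_support i)
  -- `g` swaps the ends of the geodesic from `a` to `g a`, hence reverses it
  have hrev : ∀ i ≤ w.length, g (w.getVert i) = w.getVert (w.length - i) := by
    intro i hi
    have hgx : g (w.getVert i) ∈ seg G a (g a) := by
      simpa [hfix, seg_comm G a] using g.apply_mem_seg (hmem i)
    refine hG.eq_of_mem_seg_of_dist_eq hgx (hmem _) ?_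
    have hx : G.dist a (w.getVert i) + G.dist (w.getVert i) (g a) = G.dist a (g a) := hmem i
    have := dist_comm (G := G) (u := g a) (v := w.getVert i)
    calc G.dist a (g (w.getVert i)) = G.dist (g (g a)) (g (w.getVert i)) := by rw [hfix]
      _ = G.dist (g a) (w.getVert i) := g.dist_apply _ _
      _ = G.dist a (w.getVert (w.length - i)) := by
        rw [w.dist_getVert hw hi] at hx
        rw [w.dist_getVert hw (Nat.sub_le _ _)]
        omega
  obtain ⟨t, ht | ht⟩ := Nat.even_or_odd' w.length
  · have h := ell_le_dist g (w.getVert t)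
    rw [hrev t (by omega), show w.length - t = t by omega, dist_self] at h
    omega
  · refine hg _ _ (w.adj_getVert_succ (i := t) (by omega)) ⟨?_, ?_⟩
    · rw [hrev t (by omega), show w.length - t = t + 1 by omega]
    · rw [hrev (t + 1) (by omega), show w.length - (t + 1) = t by omega]

lemma dist_apply_apply (hG : G.IsTree) {g : G ≃g G} (hg : noInv G g) (hpos : 0 < ell G g)
    {a : V} (ha : a ∈ axisSet G g) : G.dist a (g (g a)) = 2 * ell G g := by
  obtain ⟨m, hm₁, hm₂, hm₃⟩ := hG.exists_median a (g a) (g (g a))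
  have hgm : g m ∈ seg G (g a) (g (g a)) := g.apply_mem_seg hm₁
  have hga : G.dist (g a) (g m) = G.dist a m := g.dist_apply a m
  have hgg : G.dist (g a) (g (g a)) = ell G g := (g.dist_apply a (g a)).trans ha
  have ha' : G.dist a (g a) = ell G g := ha
  have hmg := ell_le_dist g m
  have := dist_comm (G := G) (u := m) (v := g a)
  have := dist_comm (G := G) (u := m) (v := g m)
  -- `m` and `g m` both lie on the geodesic from `g a` to `g (g a)`; comparing their positions
  -- forces `m = g a`, or `m = a` and `g (g a) = a`
  have hcases : G.dist a (g (g a)) = 2 * ell G g ∨ G.dist a (g (g a)) = 0 := by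
    rcases le_total (G.dist (g a) m) (G.dist (g a) (g m)) with hle | hle
    · have := hG.mem_seg_of_dist_le hm₂ hgm hle
      simp only [seg, Set.mem_ofPred_eq] at *
      omega
    · have := hG.mem_seg_of_dist_le hgm hm₂ hle
      simp only [seg, Set.mem_ofPred_eq] at *
      omega
  refine hcases.resolve_right fun h0 => hG.apply_apply_ne_self hg hpos ha ?_
  exact (hG.connected.dist_eq_zero_iff.mp h0).symm

lemma dist_apply_of_mem_seg (hG : G.IsTree) {g : G ≃g G} (hg : noInv G g)
    (hpos : 0 < ell G g) {a x : V} (ha : a ∈ axisSet G g) (hx : x ∈ seg G a (g a)) :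
    G.dist a (g x) = G.dist a x + ell G g := by
  have ha' : G.dist a (g a) = ell G g := ha
  have hx' : G.dist a x + G.dist x (g a) = G.dist a (g a) := hx
  rcases Nat.eq_zero_or_pos (G.dist x (g a)) with h0 | hxa
  · rw [hG.connected.dist_eq_zero_iff.mp h0, hG.dist_apply_apply hg hpos ha]
    omega
  · have htri := hG.connected.dist_triangle (u := x) (v := g a) (w := g x)
    rw [g.dist_apply] at htri
    have := ell_le_dist g x
    have hgx : g a ∈ seg G x (g x) := by
      change _ + _ = _
      rw [g.dist_apply]
      omega
    rw [hG.dist_eq_add_add_of_mem_seg hxa hx hgx, g.dist_apply]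
    omega

lemma dist_pow_apply (hG : G.IsTree) {h : G ≃g G} {a : V} {m : ℕ} (hm : 0 < m)
    (h₁ : G.dist a (h a) = m) (h₂ : G.dist a (h (h a)) = 2 * m) (n : ℕ) :
    G.dist a ((h ^ n) a) = n * m := by
  suffices ∀ n, G.dist a ((h ^ n) a) = n * m ∧ G.dist a ((h ^ (n + 1)) a) = (n + 1) * m from
    (this n).1
  intro n
  induction n with
  | zero => simpa using h₁
  | succ n ih =>
    refine ⟨ih.2, ?_⟩
    have e₁ : (h ^ (n + 1)) a = (h ^ n) (h a) := by rw [pow_succ, RelIso.mul_apply]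
    have e₂ : (h ^ (n + 1 + 1)) a = (h ^ (n + 1)) (h a) := by rw [pow_succ, RelIso.mul_apply]
    have hpr : G.dist ((h ^ n) a) ((h ^ (n + 1)) a) = m := by rw [e₁, Iso.dist_apply, h₁]
    have hrc : G.dist ((h ^ (n + 1)) a) ((h ^ (n + 1 + 1)) a) = m := by
      rw [e₂, Iso.dist_apply, h₁]
    have hpc : G.dist ((h ^ n) a) ((h ^ (n + 1 + 1)) a) = 2 * m := by
      rw [e₂, pow_succ, RelIso.mul_apply, Iso.dist_apply, h₂]
    rw [hG.dist_eq_add_add_of_mem_seg (p := (h ^ n) a) (r := (h ^ (n + 1)) a) (by omega)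
      (by change _ + _ = _; rw [ih.1, ih.2, hpr]; ring) (by change _ + _ = _; omega),
      ih.1, hpr, hrc]
    ring

lemma le_ell_of_dist_apply_apply (hG : G.IsTree) {h : G ≃g G} {a : V} {m : ℕ} (hm : 0 < m)
    (h₁ : G.dist a (h a) = m) (h₂ : G.dist a (h (h a)) = 2 * m) : m ≤ ell G h := by
  refine le_csInf ⟨_, a, rfl⟩ ?_
  rintro _ ⟨y, rfl⟩
  -- the orbit of `a` grows like `n * m`, that of `y` at most like `n * d(y, h y)`
  have hbound : ∀ n : ℕ, n * m ≤ 2 * G.dist a y + n * G.dist y (h y) := by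
    intro n
    have := hG.connected.dist_triangle (u := a) (v := y) (w := (h ^ n) a)
    have := hG.connected.dist_triangle (u := y) (v := (h ^ n) y) (w := (h ^ n) a)
    have := (h ^ n).dist_apply y a
    have := hG.connected.dist_pow_apply_le h y n
    have := dist_comm (G := G) (u := y) (v := a)
    rw [hG.dist_pow_apply hm h₁ h₂ n] at *
    omega
  by_contra! hlt
  have := hbound (2 * G.dist a y + 1)
  nlinarith

lemma add_ell_le_ell_mul (hG : G.IsTree) {g₁ g₂ : G ≃g G} (hg₁ : noInv G g₁)
    (hpos : 0 < ell G g₁) {p : V} (hp₁ : p ∈ axisSet G g₁) (hp₂ : p ∈ axisSet G g₂)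
    (hr₂ : g₁ p ∈ axisSet G g₂) (hr : G.dist p (g₂ (g₁ p)) = ell G g₁ + ell G g₂) :
    ell G g₁ + ell G g₂ ≤ ell G (g₁ * g₂) := by
  -- the points `g₂⁻¹ p, p, g₁ p, g₁ (g₁ p), g₁ (g₂ (g₁ p))` lie in this order on a geodesic
  have hp₁' : G.dist p (g₁ p) = ell G g₁ := hp₁
  have hap : G.dist (g₂⁻¹ p) p = ell G g₂ := by
    rw [← g₂.dist_apply, RelIso.apply_inv_self]
    exact hp₂
  have har : G.dist (g₂⁻¹ p) (g₁ p) = ell G g₁ + ell G g₂ := by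
    rw [← g₂.dist_apply, RelIso.apply_inv_self]
    exact hr
  have hrr : G.dist (g₁ p) (g₁ (g₁ p)) = ell G g₁ := (g₁.dist_apply _ _).trans hp₁
  have hrs : G.dist (g₁ (g₁ p)) (g₁ (g₂ (g₁ p))) = ell G g₂ := (g₁.dist_apply _ _).trans hr₂
  have hrt : G.dist (g₁ p) (g₁ (g₂ (g₁ p))) = ell G g₁ + ell G g₂ :=
    (g₁.dist_apply _ _).trans hr
  have hsq := hG.dist_apply_apply hg₁ hpos hp₁
  have hJ₁ := hG.dist_eq_add_add_of_mem_seg (a := g₂⁻¹ p) (c := g₁ (g₁ p)) (hp₁'.symm ▸ hpos)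
    (show _ + _ = _ by omega) (show _ + _ = _ by omega)
  have hJ₂ := hG.dist_eq_add_add_of_mem_seg (a := g₂⁻¹ p) (c := g₁ (g₂ (g₁ p)))
    (hrr.symm ▸ hpos) (show _ + _ = _ by omega) (show _ + _ = _ by omega)
  have happ : (g₁ * g₂) (g₂⁻¹ p) = g₁ p := by rw [RelIso.mul_apply, RelIso.apply_inv_self]
  refine hG.le_ell_of_dist_apply_apply (a := g₂⁻¹ p) (by omega) (by rw [happ, har]) ?_
  rw [happ, RelIso.mul_apply, hJ₂]
  omega

end IsTree

end SimpleGraph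

theorem stmt14_general (G : SimpleGraph V) (hT : G.IsTree) (g₁ g₂ : G ≃g G)
    (h₁ : noInv G g₁) (h₂ : noInv G g₂)
    (hyp₁ : 0 < ell G g₁)
    (p q : V)
    (hseg : seg G p q ⊆ axisSet G g₁ ∩ axisSet G g₂)
    (hd₁ : translatesToward G g₁ p q) (hd₂ : translatesToward G g₂ p q)
    (hΔ : min (ell G g₁) (ell G g₂) ≤ G.dist p q)
    (hle : ell G g₁ ≤ ell G g₂) :
    (ell G (g₁ * g₁ * g₂⁻¹) : ℤ) ≤ (ell G (g₁ * g₂) : ℤ) - (ell G g₁ : ℤ) := by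
  have hp := hseg (left_mem_seg G p q)
  have hr_pq : g₁ p ∈ seg G p q :=
    apply_mem_seg_of_translatesToward hp.1 hd₁ (min_eq_left hle ▸ hΔ)
  have hr := hseg hr_pq
  have hr_ps : g₁ p ∈ seg G p (g₂ p) := by
    rcases le_total (ell G g₂) (G.dist p q) with h | h
    · exact hT.mem_seg_of_dist_le hr_pq (apply_mem_seg_of_translatesToward hp.2 hd₂ h)
        (hp.1.trans_le (hle.trans_eq hp.2.symm))
    · exact seg_subset_seg hT.connected (mem_seg_apply_of_translatesToward hp.2 hd₂ h) hr_pq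
  have hlow : ell G g₁ + ell G g₂ ≤ ell G (g₁ * g₂) := by
    refine hT.add_ell_le_ell_mul h₁ hyp₁ hp.1 hp.2 hr.2 ?_
    rw [hT.dist_apply_of_mem_seg h₂ (hyp₁.trans_le hle) hp.2 hr_ps, hp.1]
  have hupp : ell G (g₁ * g₁ * g₂⁻¹) ≤ ell G g₂ := by
    have hps : ell G g₁ + G.dist (g₁ p) (g₂ p) = ell G g₂ := hp.1 ▸ hp.2 ▸ hr_ps
    calc ell G (g₁ * g₁ * g₂⁻¹) ≤ G.dist (g₂ p) (g₁ (g₁ p)) := by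
          simpa [RelIso.mul_apply] using ell_le_dist (g₁ * g₁ * g₂⁻¹) (g₂ p)
      _ ≤ G.dist (g₂ p) (g₁ p) + G.dist (g₁ p) (g₁ (g₁ p)) := hT.connected.dist_triangle
      _ = ell G g₂ := by rw [dist_comm, show G.dist (g₁ p) (g₁ (g₁ p)) = ell G g₁ from hr.1]; omega
  omega

/-- Same-orientation overlap of length at least the minimum of the translation lengths,
with l(g₁) ≤ l(g₂): the square-replacement inequality. -/
theorem stmt14 (G : SimpleGraph V) (hT : G.IsTree) (g₁ g₂ : G ≃g G)
    (h₁ : noInv G g₁) (h₂ : noInv G g₂)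
    (hyp₁ : 0 < ell G g₁) (hyp₂ : 0 < ell G g₂)
    (p q : V)
    (hseg : seg G p q ⊆ axisSet G g₁ ∩ axisSet G g₂)
    (hd₁ : translatesToward G g₁ p q) (hd₂ : translatesToward G g₂ p q)
    (hΔ : min (ell G g₁) (ell G g₂) ≤ G.dist p q)
    (hle : ell G g₁ ≤ ell G g₂) :
    (ell G (g₁ * g₁ * g₂⁻¹) : ℤ) ≤ (ell G (g₁ * g₂) : ℤ) - (ell G g₁ : ℤ) :=
  stmt14_general G hT g₁ g₂ h₁ h₂ hyp₁ p q hseg hd₁ hd₂ hΔ hle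
end

section
/- Let g₁, g₂, g₃ be hyperbolic isometries of a simplicial tree such that no two of the axes γ₁, γ₂, γ₃ intersect, and suppose the distance along γ₃ between Proj_{γ₃}(γ₁) and Proj_{γ₃}(γ₂) is at least l(g₃), with g₃ translating the projection of γ₁ towards the projection of γ₂. Then l(g₃g₁g₃⁻¹ · g₂) ≤ l(g₁g₂) − 2l(g₃) and l(g₃g₁g₃⁻¹ · g₂⁻¹) ≤ l(g₁g₂⁻¹) − 2l(g₃). -/
open SimpleGraph

variable {V : Type*}

/-!
In a tree every nonempty geodesically convex set `C` has a gate: a point `c₀ ∈ C` through which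
every geodesic from `x` into `C` passes. Axes are convex, and the displacement of `x` under `w` is
`ℓ(w) + 2 d(x, Axis w)`. If the axes of `g` and `h` are disjoint and `u, v` realize their distance,
then `v` is moved by `ℓ(g) + ℓ(h) + 2 d(u, v)` by `gh` and twice that by `(gh)²`, so
`ℓ(gh) = ℓ(g) + ℓ(h) + 2 d(u, v)`. The geodesic from the axis of `g₁` to that of `g₂` runs
through both projections `p₁, p₂` onto the axis of `g₃`, so `ℓ(g₁g₂)` is at least
`ℓ(g₁) + ℓ(g₂) + 2 (d(x₁, p₁) + d(p₁, p₂) + d(p₂, x₂))`, with `x₁, x₂` the points of the axes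
nearest to `p₁, p₂`. The axis of `g₃g₁g₃⁻¹` contains `g₃ x₁`, which is within
`d(x₁, p₁) + d(p₁, p₂) - ℓ(g₃) + d(p₂, x₂)` of `x₂`; this bounds `ℓ(g₃g₁g₃⁻¹g₂)`. The second
inequality is the first one for `g₂⁻¹`, which has the same axis and translation length.
-/

variable {G : SimpleGraph V}

theorem SimpleGraph.Iso.dist_apply_le_s17 {V' : Type*} {G' : SimpleGraph V'} (f : G ≃g G')
    (u v : V) : G'.dist (f u) (f v) ≤ G.dist u v := by
  by_cases h : G.Reachable u v
  · obtain ⟨p, hp⟩ := h.exists_walk_length_eq_dist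
    simpa [hp] using dist_le (p.map f.toHom)
  · simp [dist_eq_zero_of_not_reachable (Iso.reachable_iff.not.mpr h)]

theorem SimpleGraph.Iso.dist_apply_s17 {V' : Type*} {G' : SimpleGraph V'} (f : G ≃g G')
    (u v : V) : G'.dist (f u) (f v) = G.dist u v :=
  (f.dist_apply_le_s17 u v).antisymm (by simpa using f.symm.dist_apply_le_s17 (f u) (f v))

lemma SimpleGraph.IsTree.length_eq_dist_of_isPath (hT : G.IsTree) {u v : V} {p : G.Walk u v}
    (hp : p.IsPath) : p.length = G.dist u v := by
  obtain ⟨q, hq, hql⟩ := hT.connected.exists_path_of_dist u v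
  rw [(hT.existsUnique_path u v).unique hp hq, hql]

lemma mem_seg {x y m : V} : m ∈ seg G x y ↔ G.dist x m + G.dist m y = G.dist x y := Iff.rfl

lemma left_mem_seg_s17 (x y : V) : x ∈ seg G x y := by simp [mem_seg]

lemma right_mem_seg (x y : V) : y ∈ seg G x y := by simp [mem_seg]

lemma seg_comm_s17 (x y : V) : seg G x y = seg G y x := by
  ext m
  simp only [mem_seg, dist_comm]
  omega

lemma SimpleGraph.IsTree.mem_seg_iff_mem_support (hT : G.IsTree) {x y m : V} {p : G.Walk x y}
    (hp : p.IsPath) : m ∈ seg G x y ↔ m ∈ p.support := by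
  constructor
  · intro hm
    obtain ⟨q, hq⟩ := hT.connected.exists_walk_length_eq_dist x m
    obtain ⟨r, hr⟩ := hT.connected.exists_walk_length_eq_dist m y
    have hqr : (q.append r).IsPath := by
      refine (q.append r).isPath_of_length_eq_dist ?_
      rw [Walk.length_append, hq, hr]
      exact hm
    rw [← (hT.existsUnique_path x y).unique hqr hp]
    simp
  · intro hm
    obtain ⟨q, r, hq, hr, rfl⟩ := hp.mem_support_iff_exists_append.mp hm
    have := hT.length_eq_dist_of_isPath hp
    rwa [Walk.length_append, hT.length_eq_dist_of_isPath hq,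
      hT.length_eq_dist_of_isPath hr] at this

lemma SimpleGraph.IsTree.mem_seg_of_dist_le_s17 (hT : G.IsTree) {x y m n : V} (hm : m ∈ seg G x y)
    (hn : n ∈ seg G x y) (hle : G.dist x m ≤ G.dist x n) : m ∈ seg G x n ∧ n ∈ seg G m y := by
  obtain ⟨p, hp, -⟩ := hT.connected.exists_path_of_dist x y
  obtain ⟨q, r, hq, hr, rfl⟩ := hp.mem_support_iff_exists_append.mp
    ((hT.mem_seg_iff_mem_support hp).mp hm)
  rcases (Walk.mem_support_append_iff q r).mp ((hT.mem_seg_iff_mem_support hp).mp hn)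
    with hnq | hnr
  · have hnm := mem_seg.mp ((hT.mem_seg_iff_mem_support hq).mpr hnq)
    obtain rfl : n = m := hT.connected.dist_eq_zero_iff.mp (by omega)
    simp [mem_seg]
  · have hnm : n ∈ seg G m y := (hT.mem_seg_iff_mem_support hr).mpr hnr
    refine ⟨?_, hnm⟩
    rw [mem_seg] at hm hn hnm ⊢
    omega

def IsSegConvex (G : SimpleGraph V) (C : Set V) : Prop :=
  ∀ x ∈ C, ∀ y ∈ C, seg G x y ⊆ C

def IsGate (G : SimpleGraph V) (x c₀ : V) (C : Set V) : Prop :=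
  c₀ ∈ C ∧ ∀ c ∈ C, G.dist x c = G.dist x c₀ + G.dist c₀ c

lemma SimpleGraph.IsTree.isSegConvex_seg (hT : G.IsTree) (x y : V) :
    IsSegConvex G (seg G x y) := by
  suffices ∀ m ∈ seg G x y, ∀ n ∈ seg G x y, G.dist x m ≤ G.dist x n → seg G m n ⊆ seg G x y by
    intro m hm n hn
    rcases le_total (G.dist x m) (G.dist x n) with h | h
    · exact this m hm n hn h
    · rw [seg_comm_s17]
      exact this n hn m hm h
  intro m hm n hn hle u hu
  obtain ⟨hmn, hny⟩ := hT.mem_seg_of_dist_le_s17 hm hn hle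
  have hxu : G.dist x u ≤ G.dist x m + G.dist m u := hT.connected.dist_triangle
  have huy : G.dist u y ≤ G.dist u n + G.dist n y := hT.connected.dist_triangle
  have hxy : G.dist x y ≤ G.dist x u + G.dist u y := hT.connected.dist_triangle
  rw [mem_seg] at hm hn hmn hny hu ⊢
  omega

lemma SimpleGraph.IsTree.mem_seg_of_inter_subset (hT : G.IsTree) {x c y : V}
    (h : seg G x c ∩ seg G c y ⊆ {c}) : c ∈ seg G x y := by
  obtain ⟨p, hp, hpl⟩ := hT.connected.exists_path_of_dist x c
  obtain ⟨q, hq, hql⟩ := hT.connected.exists_path_of_dist c y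
  have hpq : (p.append q).IsPath := by
    rw [Walk.isPath_def, Walk.support_append, List.nodup_append]
    refine ⟨hp.support_nodup, hq.support_nodup.sublist q.support.tail_sublist, ?_⟩
    rintro w hwp _ hwq rfl
    obtain rfl : w = c := h ⟨(hT.mem_seg_iff_mem_support hp).mpr hwp,
      (hT.mem_seg_iff_mem_support hq).mpr (List.mem_of_mem_tail hwq)⟩
    have := hq.support_nodup
    rw [← q.cons_tail_support, List.nodup_cons] at this
    exact this.1 hwq
  have := hT.length_eq_dist_of_isPath hpq
  rwa [Walk.length_append, hpl, hql] at this

lemma SimpleGraph.IsTree.isGate_of_forall_dist_le (hT : G.IsTree) {C : Set V}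
    (hC : IsSegConvex G C) {x c₀ : V} (hc₀ : c₀ ∈ C) (hmin : ∀ c ∈ C, G.dist x c₀ ≤ G.dist x c) :
    IsGate G x c₀ C := by
  refine ⟨hc₀, fun c hc => (mem_seg.mp (hT.mem_seg_of_inter_subset ?_)).symm⟩
  rintro w ⟨hxw, hwc⟩
  have := hmin w (hC c₀ hc₀ c hc hwc)
  rw [mem_seg] at hxw
  exact hT.connected.dist_eq_zero_iff.mp (by omega)

lemma SimpleGraph.IsTree.exists_isGate (hT : G.IsTree) {C : Set V} (hC : IsSegConvex G C)
    (hne : C.Nonempty) (x : V) : ∃ c₀, IsGate G x c₀ C :=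
  ⟨_, hT.isGate_of_forall_dist_le hC (Function.argminOn_mem (G.dist x) C hne)
    fun _ hc => Function.argminOn_le (G.dist x) C hc⟩

lemma SimpleGraph.IsTree.exists_isGate_seg (hT : G.IsTree) (x y z : V) :
    ∃ m, IsGate G z m (seg G x y) :=
  hT.exists_isGate (hT.isSegConvex_seg x y) ⟨x, left_mem_seg_s17 x y⟩ z

lemma SimpleGraph.IsTree.dist_eq_of_isGate_of_ne (hT : G.IsTree) {C : Set V}
    (hC : IsSegConvex G C) {x y a b : V} (ha : IsGate G x a C) (hb : IsGate G y b C)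
    (hab : a ≠ b) : G.dist x y = G.dist x a + G.dist a b + G.dist b y := by
  obtain ⟨m, hmS, hm⟩ := hT.exists_isGate_seg x b y
  have hmx := hm x (left_mem_seg_s17 x b)
  have hmb := hm b (right_mem_seg x b)
  have haS : a ∈ seg G x b := (ha.2 b hb.1).symm
  have hba := hb.2 a ha.1
  rcases le_total (G.dist x m) (G.dist x a) with h | h
  · -- `m` would lie before `a` on the geodesic from `x` to `b`, making `y` closer to `a` than `b`
    have hamb := mem_seg.mp (hT.mem_seg_of_dist_le_s17 hmS haS h).2
    have hya : G.dist y a ≤ G.dist y m + G.dist m a := hT.connected.dist_triangle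
    rw [dist_comm (u := b)] at hba
    exact absurd (hT.connected.dist_eq_zero_iff.mp (by omega)) hab
  · have hmab := (hT.mem_seg_of_dist_le_s17 haS hmS h).2
    have hxm := ha.2 m (hC a ha.1 b hb.1 hmab)
    have hym := hb.2 m (hC a ha.1 b hb.1 hmab)
    rw [mem_seg] at hmab
    simp only [dist_comm] at *
    omega

lemma SimpleGraph.IsTree.dist_add_dist_le_max_s17 (hT : G.IsTree) (x y z w : V) :
    G.dist x z + G.dist y w ≤ max (G.dist x y + G.dist z w) (G.dist x w + G.dist y z) := by
  obtain ⟨m, hm⟩ := hT.exists_isGate_seg x y z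
  obtain ⟨n, hn⟩ := hT.exists_isGate_seg x y w
  have hzx := hm.2 x (left_mem_seg_s17 x y)
  have hzy := hm.2 y (right_mem_seg x y)
  have hwx := hn.2 x (left_mem_seg_s17 x y)
  have hwy := hn.2 y (right_mem_seg x y)
  have hmS := mem_seg.mp hm.1
  have hnS := mem_seg.mp hn.1
  by_cases hmn : m = n
  · subst hmn
    simp only [dist_comm] at *
    omega
  · have hzw := hT.dist_eq_of_isGate_of_ne (hT.isSegConvex_seg x y) hm hn hmn
    have hxm : G.dist x m ≤ G.dist x n + G.dist n m := hT.connected.dist_triangle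
    simp only [dist_comm] at *
    omega

lemma mem_axisSet {g : G ≃g G} {x : V} : x ∈ axisSet G g ↔ G.dist x (g x) = ell G g :=
  Iff.rfl

lemma ell_le (g : G ≃g G) (x : V) : ell G g ≤ G.dist x (g x) :=
  Nat.sInf_le ⟨x, rfl⟩

lemma axisSet_nonempty [Nonempty V] (g : G ≃g G) : (axisSet G g).Nonempty :=
  Nat.sInf_mem (Set.range_nonempty _)

lemma dist_apply_eq_dist_inv_apply (g : G ≃g G) (x y : V) :
    G.dist (g x) y = G.dist x (g⁻¹ y) := by
  rw [← g.dist_apply_s17 x, RelIso.apply_inv_self]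

lemma dist_inv_apply (g : G ≃g G) (x : V) : G.dist x (g⁻¹ x) = G.dist x (g x) := by
  rw [← dist_apply_eq_dist_inv_apply, dist_comm]

lemma ell_inv (g : G ≃g G) : ell G g⁻¹ = ell G g := by
  simp only [ell, dist_inv_apply]

lemma axisSet_inv (g : G ≃g G) : axisSet G g⁻¹ = axisSet G g := by
  ext x
  simp only [mem_axisSet, ell_inv, dist_inv_apply]

lemma apply_mem_axisSet {g : G ≃g G} {x : V} (hx : x ∈ axisSet G g) : g x ∈ axisSet G g := by
  simpa only [mem_axisSet, g.dist_apply_s17] using hx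

lemma inv_apply_mem_axisSet {g : G ≃g G} {x : V} (hx : x ∈ axisSet G g) :
    g⁻¹ x ∈ axisSet G g := by
  rw [← axisSet_inv] at hx ⊢
  exact apply_mem_axisSet hx

lemma dist_conj_apply (f g : G ≃g G) (x : V) :
    G.dist (f x) ((f * g * f⁻¹) (f x)) = G.dist x (g x) := by
  simp only [RelIso.mul_apply, RelIso.inv_apply_self, f.dist_apply_s17]

lemma ell_conj (f g : G ≃g G) : ell G (f * g * f⁻¹) = ell G g := by
  rw [ell, ell, ← f.surjective.range_comp]
  simp only [Function.comp_def, dist_conj_apply]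

lemma apply_mem_axisSet_conj (f : G ≃g G) {g : G ≃g G} {x : V} (hx : x ∈ axisSet G g) :
    f x ∈ axisSet G (f * g * f⁻¹) := by
  simpa only [mem_axisSet, ell_conj, dist_conj_apply] using hx

lemma ell_mul_le (hG : G.Connected) {g h : G ≃g G} {x y : V} (hx : x ∈ axisSet G g)
    (hy : y ∈ axisSet G h) : ell G (g * h) ≤ ell G g + ell G h + 2 * G.dist x y := by
  have h₁ : G.dist y (g (h y)) ≤ G.dist y x + G.dist x (g (h y)) := hG.dist_triangle
  have h₁' : G.dist x (g (h y)) ≤ G.dist x (g x) + G.dist (g x) (g (h y)) := hG.dist_triangle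
  have h₂ : G.dist x (h y) ≤ G.dist x y + G.dist y (h y) := hG.dist_triangle
  have := ell_le (g * h) y
  rw [RelIso.mul_apply] at this
  rw [g.dist_apply_s17] at h₁'
  rw [mem_axisSet] at hx hy
  simp only [dist_comm] at *
  omega

lemma SimpleGraph.IsTree.isSegConvex_axisSet (hT : G.IsTree) (g : G ≃g G) :
    IsSegConvex G (axisSet G g) := by
  intro x hx y hy m hm
  have h := hT.dist_add_dist_le_max_s17 m (g x) (g m) (g y)
  have hmx : G.dist m (g x) ≤ G.dist m x + G.dist x (g x) := hT.connected.dist_triangle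
  have hmy : G.dist m (g y) ≤ G.dist m y + G.dist y (g y) := hT.connected.dist_triangle
  have := ell_le g m
  rw [g.dist_apply_s17, g.dist_apply_s17, g.dist_apply_s17] at h
  rw [mem_axisSet] at hx hy ⊢
  rw [mem_seg] at hm
  simp only [dist_comm] at *
  omega

lemma IsGate.apply {g : G ≃g G} {x a : V} (h : IsGate G x a (axisSet G g)) :
    IsGate G (g x) (g a) (axisSet G g) := by
  refine ⟨apply_mem_axisSet h.1, fun c hc => ?_⟩
  simpa only [dist_apply_eq_dist_inv_apply, g.dist_apply_s17] using
    h.2 (g⁻¹ c) (inv_apply_mem_axisSet hc)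

lemma IsGate.inv_apply {g : G ≃g G} {x a : V} (h : IsGate G x a (axisSet G g)) :
    IsGate G (g⁻¹ x) (g⁻¹ a) (axisSet G g) := by
  rw [← axisSet_inv] at h ⊢
  exact h.apply

lemma SimpleGraph.IsTree.dist_apply_eq_of_isGate (hT : G.IsTree) {w : G ≃g G} {x a : V}
    (h : IsGate G x a (axisSet G w)) : G.dist x (w x) = ell G w + 2 * G.dist x a := by
  have hC := hT.isSegConvex_axisSet w
  have ha := mem_axisSet.mp h.1
  by_cases hwa : a = w a
  · have hell : ell G w = 0 := by rw [← ha, ← hwa, dist_self]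
    obtain ⟨m, hmS, hgate⟩ := hT.exists_isGate_seg x (w x) a
    have hmx := hgate x (left_mem_seg_s17 x (w x))
    have hmwx := hgate (w x) (right_mem_seg x (w x))
    -- `m` and `w m` lie on the geodesic from `a = w a` to `w x` at the same distance from `a`
    have hm : m ∈ seg G a (w x) := hmwx.symm
    have hwm : w m ∈ seg G a (w x) := by
      rw [mem_seg, hwa, w.dist_apply_s17, w.dist_apply_s17, w.dist_apply_s17]
      exact hmx.symm
    have hmwm := mem_seg.mp (hT.mem_seg_of_dist_le_s17 hm hwm
      (by rw [hwa, w.dist_apply_s17, ← hwa])).1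
    rw [hwa, w.dist_apply_s17, ← hwa] at hmwm
    have hmA : m ∈ axisSet G w := by rw [mem_axisSet, hell]; omega
    have hxm := h.2 m hmA
    have hwxa : G.dist (w x) a = G.dist x a := by rw [hwa, w.dist_apply_s17, ← hwa]
    rw [mem_seg] at hmS
    simp only [dist_comm] at *
    omega
  · have := hT.dist_eq_of_isGate_of_ne hC h h.apply hwa
    rw [w.dist_apply_s17] at this
    simp only [dist_comm] at *
    omega

lemma SimpleGraph.IsTree.ell_eq_of_dist_apply_apply (hT : G.IsTree) {w : G ≃g G} {x : V}
    (h : G.dist x (w (w x)) = 2 * G.dist x (w x)) : ell G w = G.dist x (w x) := by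
  have : Nonempty V := hT.connected.nonempty
  obtain ⟨a, ha⟩ := hT.exists_isGate (hT.isSegConvex_axisSet w) (axisSet_nonempty w) x
  have hdisp := hT.dist_apply_eq_of_isGate ha
  have hwa := mem_axisSet.mp (apply_mem_axisSet ha.1)
  have h₁ : G.dist x (w (w x)) ≤ G.dist x a + G.dist a (w (w x)) := hT.connected.dist_triangle
  have h₂ : G.dist a (w (w x)) ≤ G.dist a (w a) + G.dist (w a) (w (w x)) :=
    hT.connected.dist_triangle
  have h₃ : G.dist (w a) (w (w x)) ≤ G.dist (w a) (w (w a)) + G.dist (w (w a)) (w (w x)) :=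
    hT.connected.dist_triangle
  have hwwx : G.dist (w (w a)) (w (w x)) = G.dist a x := by rw [w.dist_apply_s17, w.dist_apply_s17]
  rw [mem_axisSet.mp ha.1] at h₂
  simp only [dist_comm] at *
  omega

def IsClosestPair (G : SimpleGraph V) (C D : Set V) (u v : V) : Prop :=
  u ∈ C ∧ v ∈ D ∧ ∀ c ∈ C, ∀ d ∈ D, G.dist u v ≤ G.dist c d

lemma IsClosestPair.symm {C D : Set V} {u v : V} (h : IsClosestPair G C D u v) :
    IsClosestPair G D C v u :=
  ⟨h.2.1, h.1, fun d hd c hc => by simpa only [dist_comm] using h.2.2 c hc d hd⟩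

lemma exists_isClosestPair {C D : Set V} (hC : C.Nonempty) (hD : D.Nonempty) :
    ∃ u v, IsClosestPair G C D u v := by
  obtain ⟨u, hu, v, hv, huv⟩ := Nat.sInf_mem (Set.Nonempty.image2 (f := G.dist) hC hD)
  refine ⟨u, v, hu, hv, fun c hc d hd => ?_⟩
  rw [huv]
  exact Nat.sInf_le (Set.mem_image2_of_mem hc hd)

lemma exists_isClosestPair_of_mem_projOn {C D : Set V} (hD : D.Nonempty) {p : V}
    (hp : p ∈ projOn G C D) : ∃ x, IsClosestPair G C D p x := by
  obtain ⟨x, hx, hpx⟩ := Nat.sInf_mem (hD.image (G.dist p))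
  refine ⟨x, hp.1, hx, fun c hc d hd => ?_⟩
  rw [hpx, ← distToSet, hp.2]
  exact Nat.sInf_le (Set.mem_image2_of_mem hc hd)

section ClosestPair

variable {C D : Set V} {u v : V}

lemma SimpleGraph.IsTree.isGate_of_isClosestPair (hT : G.IsTree) (hC : IsSegConvex G C)
    (hD : IsSegConvex G D) (hCD : Disjoint C D) (h : IsClosestPair G C D u v) {b : V}
    (hb : b ∈ D) : IsGate G b u C := by
  have hvu : IsGate G v u C := hT.isGate_of_forall_dist_le hC h.1 fun c hc => by
    simpa only [dist_comm] using h.2.2 c hc v h.2.1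
  obtain ⟨a, ha⟩ := hT.exists_isGate hC ⟨u, h.1⟩ b
  obtain rfl : a = u := by
    by_contra hau
    -- otherwise the gate `a` lies on the geodesic from `b` to `v`, inside `D`
    have hbv := hT.dist_eq_of_isGate_of_ne hC ha hvu hau
    have hva := hvu.2 a ha.1
    have haD : a ∈ D := hD b hb v h.2.1 (by rw [mem_seg]; simp only [dist_comm] at *; omega)
    exact hCD.notMem_of_mem_left ha.1 haD
  exact ha

lemma SimpleGraph.IsTree.isGate_of_isClosestPair_of_ne (hT : G.IsTree) (hC : IsSegConvex G C)
    (hD : IsSegConvex G D) (hCD : Disjoint C D) (h : IsClosestPair G C D u v) {z a : V}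
    (hz : IsGate G z a C) (ha : a ≠ u) : IsGate G z v D := by
  refine ⟨h.2.1, fun b hb => ?_⟩
  have hzb := hT.dist_eq_of_isGate_of_ne hC hz (hT.isGate_of_isClosestPair hC hD hCD h hb) ha
  have hzv := hT.dist_eq_of_isGate_of_ne hC hz
    (hT.isGate_of_isClosestPair hC hD hCD h h.2.1) ha
  have hub := (hT.isGate_of_isClosestPair hD hC hCD.symm h.symm h.1).2 b hb
  omega

end ClosestPair

lemma SimpleGraph.IsTree.ell_mul_eq (hT : G.IsTree) {g h : G ≃g G} (hg : 0 < ell G g)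
    (hh : 0 < ell G h) (hgh : Disjoint (axisSet G g) (axisSet G h)) {u v : V}
    (huv : IsClosestPair G (axisSet G g) (axisSet G h) u v) :
    ell G (g * h) = ell G g + ell G h + 2 * G.dist u v := by
  have hC := hT.isSegConvex_axisSet g
  have hD := hT.isSegConvex_axisSet h
  have hu := mem_axisSet.mp huv.1
  have hv := mem_axisSet.mp huv.2.1
  have hgu : g⁻¹ u ≠ u := fun he => by rw [← dist_inv_apply, he, dist_self] at hu; omega
  have hgu' : g u ≠ u := fun he => by rw [he, dist_self] at hu; omega
  have hhv : h⁻¹ v ≠ v := fun he => by rw [← dist_inv_apply, he, dist_self] at hv; omega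
  have gate_v := hT.isGate_of_isClosestPair hC hD hgh huv huv.2.1
  have gate_u := hT.isGate_of_isClosestPair hD hC hgh.symm huv.symm huv.1
  have gate₁ : IsGate G (g⁻¹ v) (g⁻¹ u) (axisSet G g) := gate_v.inv_apply
  have gate₂ : IsGate G (h v) u (axisSet G g) :=
    hT.isGate_of_isClosestPair hC hD hgh huv (apply_mem_axisSet huv.2.1)
  have gate₃ : IsGate G (h⁻¹ (g⁻¹ v)) (h⁻¹ v) (axisSet G h) :=
    (hT.isGate_of_isClosestPair_of_ne hC hD hgh huv gate₁ hgu).inv_apply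
  have gate₄ : IsGate G (g (h v)) v (axisSet G h) :=
    hT.isGate_of_isClosestPair_of_ne hC hD hgh huv gate₂.apply hgu'
  have hvhv := gate_u.2 (h v) (apply_mem_axisSet huv.2.1)
  have hgvu : G.dist (g⁻¹ v) (g⁻¹ u) = G.dist u v := by rw [g⁻¹.dist_apply_s17, dist_comm]
  have hgu₁ : G.dist (g⁻¹ u) u = ell G g := by rw [dist_comm, dist_inv_apply, hu]
  have hhv₁ : G.dist (h⁻¹ v) v = ell G h := by rw [dist_comm, dist_inv_apply, hv]
  have hdisp₁ : G.dist v ((g * h) v) = ell G g + ell G h + 2 * G.dist u v := by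
    rw [RelIso.mul_apply, dist_comm, dist_apply_eq_dist_inv_apply, dist_comm,
      hT.dist_eq_of_isGate_of_ne hC gate₁ gate₂ hgu, hvhv, hgvu, hgu₁]
    omega
  have hgvv : G.dist (g⁻¹ v) v = 2 * G.dist u v + ell G g := by
    rw [hT.dist_eq_of_isGate_of_ne hC gate₁ gate_v hgu, hgvu, hgu₁]
    omega
  have hdisp₂ : G.dist v ((g * h) ((g * h) v)) = 2 * G.dist v ((g * h) v) := by
    have hinv : (g * h)⁻¹ v = h⁻¹ (g⁻¹ v) := by rw [mul_inv_rev, RelIso.mul_apply]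
    have hsq : G.dist v ((g * h) ((g * h) v)) = G.dist ((g * h)⁻¹ v) ((g * h) v) := by
      rw [← (g * h).dist_apply_s17 ((g * h)⁻¹ v), RelIso.apply_inv_self]
    rw [hsq, hinv, RelIso.mul_apply, hT.dist_eq_of_isGate_of_ne hD gate₃ gate₄ hhv, h⁻¹.dist_apply_s17,
      hgvv, hhv₁, ← RelIso.mul_apply, hdisp₁]
    ring
  rw [hT.ell_eq_of_dist_apply_apply hdisp₂, hdisp₁]

lemma SimpleGraph.IsTree.dist_eq_of_isClosestPair_of_ne (hT : G.IsTree) {A B C : Set V}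
    (hA : IsSegConvex G A) (hB : IsSegConvex G B) (hC : IsSegConvex G C)
    (hAC : Disjoint A C) (hBC : Disjoint B C) {p q x y : V}
    (hpx : IsClosestPair G C A p x) (hqy : IsClosestPair G C B q y) (hpq : p ≠ q)
    {a b : V} (ha : a ∈ A) (hb : b ∈ B) :
    G.dist a b = G.dist a x + G.dist x p + G.dist p q + G.dist q y + G.dist y b := by
  have hab := hT.dist_eq_of_isGate_of_ne hC (hT.isGate_of_isClosestPair hC hA hAC.symm hpx ha)
    (hT.isGate_of_isClosestPair hC hB hBC.symm hqy hb) hpq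
  have hpa := (hT.isGate_of_isClosestPair hA hC hAC hpx.symm hpx.1).2 a ha
  have hqb := (hT.isGate_of_isClosestPair hB hC hBC hqy.symm hqy.1).2 b hb
  simp only [dist_comm] at *
  omega

lemma SimpleGraph.IsTree.ell_conj_mul_add_le (hT : G.IsTree) {g₁ g₂ g₃ : G ≃g G}
    (hg₁ : 0 < ell G g₁) (hg₂ : 0 < ell G g₂)
    (h₁₂ : Disjoint (axisSet G g₁) (axisSet G g₂)) (h₁₃ : Disjoint (axisSet G g₁) (axisSet G g₃))
    (h₂₃ : Disjoint (axisSet G g₂) (axisSet G g₃)) {p₁ p₂ x₁ x₂ : V}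
    (hx₁ : IsClosestPair G (axisSet G g₃) (axisSet G g₁) p₁ x₁)
    (hx₂ : IsClosestPair G (axisSet G g₃) (axisSet G g₂) p₂ x₂) (hp : p₁ ≠ p₂)
    (hshift : G.dist (g₃ p₁) p₂ + ell G g₃ = G.dist p₁ p₂) :
    ell G (g₃ * g₁ * g₃⁻¹ * g₂) + 2 * ell G g₃ ≤ ell G (g₁ * g₂) := by
  have : Nonempty V := hT.connected.nonempty
  obtain ⟨u₁, u₂, hu⟩ := exists_isClosestPair (G := G) (axisSet_nonempty g₁) (axisSet_nonempty g₂)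
  have hsep := hT.dist_eq_of_isClosestPair_of_ne (hT.isSegConvex_axisSet g₁)
    (hT.isSegConvex_axisSet g₂) (hT.isSegConvex_axisSet g₃) h₁₃ h₂₃ hx₁ hx₂ hp hu.1 hu.2.1
  have hlower := hT.ell_mul_eq hg₁ hg₂ h₁₂ hu
  have hupper := ell_mul_le hT.connected (apply_mem_axisSet_conj g₃ hx₁.2.1) hx₂.2.1
  rw [ell_conj] at hupper
  have h₁ : G.dist (g₃ x₁) x₂ ≤ G.dist (g₃ x₁) (g₃ p₁) + G.dist (g₃ p₁) x₂ :=
    hT.connected.dist_triangle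
  have h₂ : G.dist (g₃ p₁) x₂ ≤ G.dist (g₃ p₁) p₂ + G.dist p₂ x₂ := hT.connected.dist_triangle
  rw [g₃.dist_apply_s17] at h₁
  simp only [dist_comm] at *
  omega

theorem stmt17_general (G : SimpleGraph V) (hT : G.IsTree) (g₁ g₂ g₃ : G ≃g G)
    (hyp₁ : 0 < ell G g₁) (hyp₂ : 0 < ell G g₂) (hyp₃ : 0 < ell G g₃)
    (hd₁₂ : axisSet G g₁ ∩ axisSet G g₂ = ∅)
    (hd₁₃ : axisSet G g₁ ∩ axisSet G g₃ = ∅)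
    (hd₂₃ : axisSet G g₂ ∩ axisSet G g₃ = ∅)
    (p₁ p₂ : V)
    (hp₁ : p₁ ∈ projOn G (axisSet G g₃) (axisSet G g₁))
    (hp₂ : p₂ ∈ projOn G (axisSet G g₃) (axisSet G g₂))
    (hdist : ell G g₃ ≤ G.dist p₁ p₂)
    (hdir : translatesToward G g₃ p₁ p₂) :
    (ell G (g₃ * g₁ * g₃⁻¹ * g₂) : ℤ) ≤ (ell G (g₁ * g₂) : ℤ) - 2 * (ell G g₃ : ℤ) ∧
    (ell G (g₃ * g₁ * g₃⁻¹ * g₂⁻¹) : ℤ) ≤ (ell G (g₁ * g₂⁻¹) : ℤ) - 2 * (ell G g₃ : ℤ) := by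
  have : Nonempty V := hT.connected.nonempty
  rw [← Set.disjoint_iff_inter_eq_empty] at hd₁₂ hd₁₃ hd₂₃
  obtain ⟨x₁, hx₁⟩ := exists_isClosestPair_of_mem_projOn (axisSet_nonempty g₁) hp₁
  obtain ⟨x₂, hx₂⟩ := exists_isClosestPair_of_mem_projOn (axisSet_nonempty g₂) hp₂
  have hp : p₁ ≠ p₂ := by
    rintro rfl
    rw [dist_self] at hdist
    omega
  have hshift : G.dist (g₃ p₁) p₂ + ell G g₃ = G.dist p₁ p₂ := by
    rw [translatesToward, abs_of_nonneg (by omega)] at hdir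
    omega
  have key := hT.ell_conj_mul_add_le hyp₁ hyp₂ hd₁₂ hd₁₃ hd₂₃ hx₁ hx₂ hp hshift
  have key' := hT.ell_conj_mul_add_le (g₂ := g₂⁻¹) hyp₁ (by rwa [ell_inv])
    (by rwa [axisSet_inv]) hd₁₃ (by rwa [axisSet_inv]) hx₁ (by rwa [axisSet_inv]) hp hshift
  constructor <;> omega

/-- Three hyperbolic isometries with pairwise disjoint axes; the projections of the axes
of g₁ and g₂ onto the axis of g₃ are at distance at least l(g₃), with g₃ translating the
first towards the second. Then conjugating g₁ by g₃ shortens the relevant products. -/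
theorem stmt17 (G : SimpleGraph V) (hT : G.IsTree) (g₁ g₂ g₃ : G ≃g G)
    (h₁ : noInv G g₁) (h₂ : noInv G g₂) (h₃ : noInv G g₃)
    (hyp₁ : 0 < ell G g₁) (hyp₂ : 0 < ell G g₂) (hyp₃ : 0 < ell G g₃)
    (hd₁₂ : axisSet G g₁ ∩ axisSet G g₂ = ∅)
    (hd₁₃ : axisSet G g₁ ∩ axisSet G g₃ = ∅)
    (hd₂₃ : axisSet G g₂ ∩ axisSet G g₃ = ∅)
    (p₁ p₂ : V)
    (hp₁ : p₁ ∈ projOn G (axisSet G g₃) (axisSet G g₁))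
    (hp₂ : p₂ ∈ projOn G (axisSet G g₃) (axisSet G g₂))
    (hdist : ell G g₃ ≤ G.dist p₁ p₂)
    (hdir : translatesToward G g₃ p₁ p₂) :
    (ell G (g₃ * g₁ * g₃⁻¹ * g₂) : ℤ) ≤ (ell G (g₁ * g₂) : ℤ) - 2 * (ell G g₃ : ℤ) ∧
    (ell G (g₃ * g₁ * g₃⁻¹ * g₂⁻¹) : ℤ) ≤ (ell G (g₁ * g₂⁻¹) : ℤ) - 2 * (ell G g₃ : ℤ) :=
  stmt17_general G hT g₁ g₂ g₃ hyp₁ hyp₂ hyp₃ hd₁₂ hd₁₃ hd₂₃ p₁ p₂ hp₁ hp₂ hdist hdir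
end
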